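/- arXiv:2602.12664 — 5 statements merged into one kernel-verified Lean document; each statement's English description precedes it below -/
import Mathlib

section
/- With U_S := span_ℝ{1_{S,π} : π ∈ Π*(S)} ⊆ ℝ^{Π*(V)} (and U_S := {0} if |S| ≤ 1), the dimension of U_S equals B_{|S|} − 1, where B_n is the n-th Bell number. -/
open Submodule Finset

variable {V : Type*} [Fintype V] [DecidableEq V]

/-- The set of nontrivial partitions `Π*(α)` of `α`, encoded as setoids different from `⊤`
(the one-block partition). -/
def NontrivPart (α : Type*) := {P : Setoid α // P ≠ ⊤}

/-- Restriction `P|_S` of a partition of `V` to a subset `S`: the partition of `S` whose blocks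
are the nonempty intersections of blocks of `P` with `S`. -/
def restrictS (S : Set V) (P : Setoid V) : Setoid ↥S := Setoid.comap Subtype.val P

open Classical in
/-- The indicator function `1_{S,π} : Π*(V) → ℝ`, equal to `1` at `P` iff `P|_S = π`. -/
noncomputable def ind (S : Set V) (π : Setoid ↥S) : NontrivPart V → ℝ :=
  fun P => if restrictS S P.1 = π then 1 else 0

/-- The subspace `U_S ⊆ ℝ^{Π*(V)}` spanned by the indicators `1_{S,π}` over nontrivial
partitions `π` of `S` (equal to `{0}` when `|S| ≤ 1`, since then no nontrivial `π` exists). -/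
noncomputable def U (S : Set V) : Submodule ℝ (NontrivPart V → ℝ) :=
  Submodule.span ℝ {f | ∃ π : Setoid ↥S, π ≠ ⊤ ∧ f = ind S π}

/-- Bell number `B n`: the number of partitions (setoids) of an `n`-element set. -/
noncomputable def bell (n : ℕ) : ℕ := Nat.card (Setoid (Fin n))

/-- Stirling number of the second kind `S(u,j)`: the number of partitions of a `u`-element set
into exactly `j` blocks. -/
noncomputable def stirling (u j : ℕ) : ℕ :=
  Nat.card {σ : Setoid (Fin u) // Nat.card (Quotient σ) = j}

/-
Each nontrivial partition `π` of `S` is the restriction of some nontrivial partition `P` of `V`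
(for instance `π` with singletons added), and `1_{S,σ}(P) = [σ = π]`. So evaluation at these
points sends the indicators to the standard basis, hence they are linearly independent and
`dim U_S = #Π*(S) = B_{|S|} - 1`.
-/

def Equiv.setoidCongr {α β : Type*} (e : α ≃ β) : Setoid α ≃ Setoid β where
  toFun s := s.comap e.symm
  invFun s := s.comap e
  left_inv s := Setoid.ext fun a b => by simp [Setoid.comap_rel]
  right_inv s := Setoid.ext fun a b => by simp [Setoid.comap_rel]

instance Setoid.finite {α : Type*} [Finite α] : Finite (Setoid α) :=
  Finite.of_injective (fun s : Setoid α => ⇑s) fun _ _ h => Setoid.eq_iff_rel_eq.2 h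

theorem Nat.card_setoid {α : Type*} [Finite α] : Nat.card (Setoid α) = bell (Nat.card α) :=
  Nat.card_congr (Finite.equivFin α).setoidCongr

theorem Nat.card_setoid_ne_top {α : Type*} [Finite α] :
    Nat.card {π : Setoid α // π ≠ ⊤} = bell (Nat.card α) - 1 := by
  classical
  have := Fintype.ofFinite (Setoid α)
  rw [← Nat.card_setoid, Nat.card_eq_fintype_card, Nat.card_eq_fintype_card,
    Fintype.card_subtype_compl, Fintype.card_subtype_eq]

theorem linearIndependent_of_apply_eq_single {R ι X : Type*} [Semiring R] [DecidableEq ι]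
    (f : ι → X → R) (x : ι → X) (h : ∀ i j, f j (x i) = (Pi.single j 1 : ι → R) i) :
    LinearIndependent R f := by
  have hcomp : (LinearMap.pi fun i => LinearMap.proj (R := R) (x i)) ∘ f =
      fun j => Pi.single j 1 :=
    funext fun j => funext fun i => h i j
  exact .of_comp _ (hcomp ▸ Pi.linearIndependent_single_one ι R)

section Restriction

omit [Fintype V] [DecidableEq V]

variable (S : Set V)

theorem restrictS_surjective : Function.Surjective (restrictS S) :=
  Setoid.comap_surjective _ Subtype.val_injective

theorem restrictS_top : restrictS S ⊤ = ⊤ :=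
  Setoid.ext fun _ _ => Iff.rfl

theorem exists_nontrivPart_restrictS_eq {π : Setoid ↥S} (hπ : π ≠ ⊤) :
    ∃ P : NontrivPart V, restrictS S P.1 = π := by
  obtain ⟨P, hP⟩ := restrictS_surjective S π
  exact ⟨⟨P, by rintro rfl; exact hπ (hP ▸ restrictS_top S)⟩, hP⟩

theorem linearIndependent_ind :
    LinearIndependent ℝ fun π : {π : Setoid ↥S // π ≠ ⊤} => ind S π.1 := by
  classical
  choose P hP using fun π : {π : Setoid ↥S // π ≠ ⊤} => exists_nontrivPart_restrictS_eq S π.2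
  refine linearIndependent_of_apply_eq_single _ P fun π σ => ?_
  simp only [ind, hP, Pi.single_apply, Subtype.ext_iff]

theorem U_eq_span_range_ind :
    U S = span ℝ (Set.range fun π : {π : Setoid ↥S // π ≠ ⊤} => ind S π.1) := by
  rw [U]
  congr 1
  ext f
  simp [eq_comm]

end Restriction

/-- `dim U_S = B_{|S|} - 1`. -/
theorem stmt1 (S : Set V) :
    Module.finrank ℝ ↥(U S) = bell (Nat.card ↥S) - 1 := by
  have := Fintype.ofFinite {π : Setoid ↥S // π ≠ ⊤}
  rw [U_eq_span_range_ind, finrank_span_eq_card (linearIndependent_ind S),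
    ← Nat.card_eq_fintype_card, Nat.card_setoid_ne_top]
end

section
/- For any subset S of a finite set V and any finite family of subsets T_1, …, T_m ⊆ V, one has U_S ∩ (U_{T_1} + ⋯ + U_{T_m}) = U_{S∩T_1} + ⋯ + U_{S∩T_m}. -/
open Submodule Finset

variable {V : Type*} [Fintype V] [DecidableEq V]

/- ### Auxiliary material -/

instance setoidFinite (α : Type*) [Finite α] : Finite (Setoid α) :=
  Finite.of_injective (fun s : Setoid α => s.r)
    (fun a b h => Setoid.ext fun x y => iff_of_eq (congrFun (congrFun h x) y))

lemma setoid_eq_top_iff {α : Type*} {P : Setoid α} : P = ⊤ ↔ ∀ a b, P a b :=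
  ⟨fun h a b => by rw [h]; trivial,
   fun h => Setoid.ext fun a b => iff_of_true (h a b) trivial⟩

/-- Extension of a partition of `A` to a partition of `V`, adding singleton blocks
outside `A`. -/
def extRel (A : Set V) (ρ : Setoid ↥A) : Setoid V :=
  ⟨fun x y => x = y ∨ ∃ hx : x ∈ A, ∃ hy : y ∈ A, ρ ⟨x, hx⟩ ⟨y, hy⟩, by
    constructor
    · intro x; exact Or.inl rfl
    · rintro x y (rfl | ⟨hx, hy, h⟩)
      · exact Or.inl rfl
      · exact Or.inr ⟨hy, hx, ρ.iseqv.symm h⟩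
    · rintro x y z (rfl | ⟨hx, hy, h⟩) h2
      · exact h2
      · rcases h2 with (rfl | ⟨hy', hz, h'⟩)
        · exact Or.inr ⟨hx, hy, h⟩
        · exact Or.inr ⟨hx, hz, ρ.iseqv.trans h h'⟩⟩

lemma extRel_rel {A : Set V} {ρ : Setoid ↥A} {x y : V} :
    (extRel A ρ) x y ↔ (x = y ∨ ∃ hx : x ∈ A, ∃ hy : y ∈ A, ρ ⟨x, hx⟩ ⟨y, hy⟩) := Iff.rfl

lemma restrict_extRel (A : Set V) (ρ : Setoid ↥A) : restrictS A (extRel A ρ) = ρ := by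
  apply Setoid.ext
  rintro ⟨a, ha⟩ ⟨b, hb⟩
  constructor
  · rintro (h | ⟨hx, hy, h⟩)
    · have : (⟨a, ha⟩ : ↥A) = ⟨b, hb⟩ := Subtype.ext h
      rw [this]
    · exact h
  · intro h
    exact Or.inr ⟨ha, hb, h⟩

lemma extRel_ne_top {A : Set V} {P : Setoid V} (hP : P ≠ ⊤) :
    extRel A (restrictS A P) ≠ ⊤ := by
  intro h
  refine hP (setoid_eq_top_iff.mpr fun a b => ?_)
  rcases setoid_eq_top_iff.mp h a b with rfl | ⟨hx, hy, hr⟩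
  · exact P.iseqv.refl a
  · exact hr

lemma restrict_ext_inter (S T' : Set V) (P : Setoid V) :
    restrictS T' (extRel S (restrictS S P)) =
      restrictS T' (extRel (S ∩ T') (restrictS (S ∩ T') P)) := by
  apply Setoid.ext
  rintro ⟨a, ha⟩ ⟨b, hb⟩
  show (a = b ∨ ∃ hx : a ∈ S, ∃ hy : b ∈ S, P a b) ↔
    (a = b ∨ ∃ hx : a ∈ S ∩ T', ∃ hy : b ∈ S ∩ T', P a b)
  constructor
  · rintro (h | ⟨hx, hy, h⟩)
    · exact Or.inl h
    · exact Or.inr ⟨⟨hx, ha⟩, ⟨hy, hb⟩, h⟩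
  · rintro (h | ⟨hx, hy, h⟩)
    · exact Or.inl h
    · exact Or.inr ⟨hx.1, hy.1, h⟩

lemma mem_U_iff {S : Set V} {f : NontrivPart V → ℝ} :
    f ∈ U S ↔
      ∃ g : Setoid ↥S → ℝ, g ⊤ = 0 ∧ ∀ P : NontrivPart V, f P = g (restrictS S P.1) := by
  classical
  constructor
  · intro hf
    induction hf using Submodule.span_induction with
    | mem x hx =>
      obtain ⟨π, hπ, rfl⟩ := hx
      refine ⟨fun ρ => if ρ = π then 1 else 0, by simp [Ne.symm hπ], fun P => ?_⟩
      by_cases h : restrictS S P.1 = π <;> simp [ind, h]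
    | zero => exact ⟨0, rfl, fun P => rfl⟩
    | add x y hx hy ihx ihy =>
      obtain ⟨g1, hg1, h1⟩ := ihx
      obtain ⟨g2, hg2, h2⟩ := ihy
      exact ⟨g1 + g2, by simp [hg1, hg2], fun P => by simp [h1 P, h2 P]⟩
    | smul a x hx ih =>
      obtain ⟨g, hg, h⟩ := ih
      exact ⟨a • g, by simp [hg], fun P => by simp [h P]⟩
  · rintro ⟨g, hg0, hfg⟩
    haveI : Fintype (Setoid ↥S) := Fintype.ofFinite _
    have hrepr : f = ∑ π ∈ Finset.univ.filter (fun π : Setoid ↥S => π ≠ ⊤), g π • ind S π := by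
      funext P
      rw [hfg P]
      rw [Finset.sum_apply]
      simp only [Pi.smul_apply, ind, smul_eq_mul, mul_ite, mul_one, mul_zero]
      rw [Finset.sum_ite_eq]
      by_cases hb : restrictS S P.1 = ⊤ <;> simp [Finset.mem_filter, hb, hg0]
    rw [hrepr]
    refine Submodule.sum_mem _ fun π hπ => Submodule.smul_mem _ _ ?_
    exact Submodule.subset_span ⟨π, (Finset.mem_filter.mp hπ).2, rfl⟩

lemma comap_top_setoid {α β : Type*} (f : α → β) :
    Setoid.comap f (⊤ : Setoid β) = ⊤ :=
  setoid_eq_top_iff.mpr fun _ _ => trivial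

lemma U_mono {A B : Set V} (h : A ⊆ B) : U A ≤ U B := by
  intro f hf
  rw [mem_U_iff] at hf ⊢
  obtain ⟨g, hg0, hfg⟩ := hf
  refine ⟨fun ρ => g (Setoid.comap (Set.inclusion h) ρ), ?_, fun P => ?_⟩
  · show g (Setoid.comap (Set.inclusion h) ⊤) = 0
    rw [comap_top_setoid]; exact hg0
  · exact hfg P

/-- `U_S ⊓ (U_{T_1} + ⋯ + U_{T_m}) = U_{S∩T_1} + ⋯ + U_{S∩T_m}`. -/
theorem stmt4 (S : Set V) (m : ℕ) (T : Fin m → Set V) :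
    U S ⊓ (⨆ i, U (T i)) = ⨆ i, U (S ∩ T i) := by
  classical
  rcases isEmpty_or_nonempty (NontrivPart V) with hE | hNE
  · haveI : Subsingleton (NontrivPart V → ℝ) := ⟨fun f g => funext fun P => hE.elim P⟩
    ext x
    rw [Subsingleton.elim x 0]
    simp
  rcases eq_or_ne S Set.univ with hS | hS
  · have h2 : (⨆ i, U (S ∩ T i)) = ⨆ i, U (T i) := by
      have h1 : ∀ i, S ∩ T i = T i := fun i => by rw [hS, Set.univ_inter]
      simp_rw [h1]
    rw [h2, inf_eq_right]
    exact iSup_le fun i => U_mono (by rw [hS]; exact Set.subset_univ _)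
  · obtain ⟨x₀, hx₀⟩ := (Set.ne_univ_iff_exists_notMem S).mp hS
    apply le_antisymm
    · rintro f hf
      rw [Submodule.mem_inf] at hf
      obtain ⟨hfS, hfT⟩ := hf
      rw [Submodule.mem_iSup_iff_exists_finsupp] at hfT
      obtain ⟨c, hc, hsum⟩ := hfT
      rw [mem_U_iff] at hfS
      obtain ⟨g, hg0, hfg⟩ := hfS
      choose gT hgT0 hgT using fun i => (mem_U_iff.mp (hc i))
      set k : (i : Fin m) → Setoid ↥(S ∩ T i) → ℝ :=
        fun i σ => gT i (restrictS (T i) (extRel (S ∩ T i) σ)) with hk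
      have hsum' : (∑ i, c i) = f := by
        rw [← hsum]; exact (Finsupp.sum_fintype c (fun _ v => v) (fun i => rfl)).symm
      have key : ∀ P : NontrivPart V, f P = ∑ i, k i (restrictS (S ∩ T i) P.1) := by
        intro P
        have hQne := extRel_ne_top (A := S) P.2
        set Q : NontrivPart V := ⟨extRel S (restrictS S P.1), hQne⟩ with hQ
        have h1 : f P = f Q := by
          rw [hfg P, hfg Q]
          congr 1
          exact (restrict_extRel S (restrictS S P.1)).symm
        have h2 : f Q = ∑ i, c i Q := by
          rw [← hsum']; exact Finset.sum_apply _ _ _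
        rw [h1, h2]
        refine Finset.sum_congr rfl fun i _ => ?_
        rw [hgT i Q]
        congr 1
        exact restrict_ext_inter S (T i) P.1
      -- the distinguished partition with `S` as one block
      obtain ⟨P1⟩ := hNE
      obtain ⟨a, b, hab⟩ : ∃ a b, ¬ P1.1 a b := by
        by_contra h
        push_neg at h
        exact P1.2 (setoid_eq_top_iff.mpr h)
      have hab' : a ≠ b := fun h => hab (h ▸ P1.1.iseqv.refl a)
      have hQ0 : extRel S (⊤ : Setoid ↥S) ≠ ⊤ := by
        intro h
        have hy : ∃ y, y ≠ x₀ := by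
          rcases eq_or_ne a x₀ with rfl | h'
          · exact ⟨b, fun hb => hab' hb.symm⟩
          · exact ⟨a, h'⟩
        obtain ⟨y, hyx⟩ := hy
        rcases setoid_eq_top_iff.mp h x₀ y with h' | ⟨hx, _, _⟩
        · exact hyx h'.symm
        · exact hx₀ hx
      set P₀ : NontrivPart V := ⟨extRel S ⊤, hQ0⟩ with hP₀
      have hres0' : ∀ i, restrictS (S ∩ T i) P₀.1 = ⊤ := by
        intro i
        apply setoid_eq_top_iff.mpr
        rintro ⟨a, ha, hat⟩ ⟨b, hb, hbt⟩
        exact Or.inr ⟨ha, hb, trivial⟩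
      have hc0 : ∑ i, k i ⊤ = 0 := by
        have hkey := key P₀
        rw [hfg P₀, restrict_extRel S ⊤, hg0] at hkey
        have : ∑ i, k i (restrictS (S ∩ T i) P₀.1) = ∑ i, k i ⊤ :=
          Finset.sum_congr rfl fun i _ => by rw [hres0' i]
        rw [this] at hkey
        exact hkey.symm
      have hrepr : f = ∑ i, (fun P : NontrivPart V =>
          k i (restrictS (S ∩ T i) P.1) - k i ⊤) := by
        funext P
        rw [Finset.sum_apply]
        rw [Finset.sum_sub_distrib, hc0, sub_zero, ← key P]
      rw [hrepr]
      refine Submodule.sum_mem _ fun i _ => ?_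
      refine le_iSup (fun i => U (S ∩ T i)) i ?_
      exact mem_U_iff.mpr ⟨fun σ => k i σ - k i ⊤, sub_self _, fun P => rfl⟩
    · exact iSup_le fun i => le_inf (U_mono Set.inter_subset_left)
        (le_trans (U_mono Set.inter_subset_right) (le_iSup (fun i => U (T i)) i))
end

section
/- For subsets S_1,…,S_m and T_1,…,T_l of a finite set V, one has (∑_{i=1}^m U_{S_i}) ∩ (∑_{j=1}^l U_{T_j}) = ∑_{i=1}^m ∑_{j=1}^l U_{S_i ∩ T_j}. -/
open Submodule Finset

variable {V : Type*} [Fintype V] [DecidableEq V]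

/-!
Write `𝟙_{≥σ}` for the indicator function on `Π*(V)` of the partitions coarser than `σ`.
By Möbius inversion on the partition lattice of `S`, `U_S` is spanned by the functions
`𝟙_{≥σ} - 1` where `σ` runs over the partitions of `V` all of whose non-singleton blocks lie
in `S`. The indicators of principal up-sets of a finite poset are linearly independent, and
`𝟙_{≥⊥} = 1` spans the kernel of `f ↦ (f - f ⊤)|_{Π*(V)}`; hence the functions `𝟙_{≥σ} - 1`,
`σ ≠ ⊥`, are linearly independent. Every sum of spaces `U_S` is therefore spanned by a
subfamily of a single independent family, so intersecting two such sums intersects the index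
sets, and a partition is discrete outside `S_i` and outside `T_j` iff it is discrete outside
`S_i ∩ T_j`.
-/

section LinearAlgebra

variable {ι R M : Type*} [Ring R] [AddCommGroup M] [Module R M] {v : ι → M}

theorem LinearIndependent.span_image_inf_span_image (hv : LinearIndependent R v) (A B : Set ι) :
    span R (v '' A) ⊓ span R (v '' B) = span R (v '' (A ∩ B)) := by
  simp only [Finsupp.span_image_eq_map_linearCombination, Finsupp.supported_inter,
    Submodule.map_inf _ hv.finsuppLinearCombination_injective]

theorem LinearIndepOn.span_image_inf_span_image {s A B : Set ι} (hv : LinearIndepOn R v s)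
    (hA : A ⊆ s) (hB : B ⊆ s) :
    span R (v '' A) ⊓ span R (v '' B) = span R (v '' (A ∩ B)) := by
  have h : ∀ X ⊆ s, v '' X = (fun i : s => v i) '' (Subtype.val ⁻¹' X) := fun X hX => by
    rw [← Set.image_image v Subtype.val, Subtype.image_preimage_coe, Set.inter_eq_right.2 hX]
  rw [h A hA, h B hB, h _ (Set.inter_subset_left.trans hA), Set.preimage_inter]
  exact LinearIndependent.span_image_inf_span_image hv _ _

theorem span_image_sdiff_singleton_of_eq_zero {a : ι} (ha : v a = 0) (A : Set ι) :
    span R (v '' (A \ {a})) = span R (v '' A) := by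
  refine le_antisymm (span_mono (Set.image_mono Set.sdiff_subset)) (span_le.2 ?_)
  rintro _ ⟨b, hb, rfl⟩
  by_cases hba : b = a
  · simp [hba, ha]
  · exact subset_span ⟨b, ⟨hb, hba⟩, rfl⟩

variable (R) in
def restrictSubEval {α : Type*} (a₀ : α) : (α → R) →ₗ[R] ({a // a ≠ a₀} → R) where
  toFun h a := h a - h a₀
  map_add' _ _ := by ext; simp only [Pi.add_apply]; abel
  map_smul' _ _ := by ext; simp [mul_sub]

theorem ker_restrictSubEval {α : Type*} (a₀ : α) :
    LinearMap.ker (restrictSubEval R a₀) = R ∙ 1 := by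
  ext h
  simp only [LinearMap.mem_ker, mem_span_singleton]
  constructor
  · intro hh
    refine ⟨h a₀, funext fun a => ?_⟩
    by_cases ha : a = a₀
    · simp [ha]
    · simpa using (sub_eq_zero.1 (congrFun hh ⟨a, ha⟩)).symm
  · rintro ⟨c, rfl⟩
    ext
    simp [restrictSubEval]

theorem span_single_one_compl_eq_ker_proj {α : Type*} [Finite α] [DecidableEq α] (a₀ : α) :
    span R ((fun a => Pi.single a (1 : R)) '' {a₀}ᶜ) =
      LinearMap.ker (LinearMap.proj a₀ : (α → R) →ₗ[R] R) := by
  have := Fintype.ofFinite α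
  apply le_antisymm
  · rw [span_le]
    rintro _ ⟨a, ha, rfl⟩
    simp [Ne.symm ha]
  · intro h (hh : h a₀ = 0)
    rw [← Finset.univ_sum_single h]
    refine sum_mem fun a _ => ?_
    by_cases ha : a = a₀
    · simp [ha, hh]
    · rw [← mul_one (h a), ← smul_eq_mul, Pi.single_smul']
      exact smul_mem _ (h a) <| subset_span <|
        Set.mem_image_of_mem (fun a => Pi.single a (1 : R)) (Set.mem_compl_singleton_iff.2 ha)

end LinearAlgebra

section IciIndicator

variable {α : Type*} [PartialOrder α]

theorem linearIndependent_indicator_Ici (R : Type*) [Ring R] [WellFoundedLT α] :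
    LinearIndependent R fun a : α => (Set.Ici a).indicator (1 : α → R) := by
  classical
  rw [linearIndependent_iff']
  intro s g hg a
  induction a using WellFoundedLT.induction with
  | ind a ih =>
    intro ha
    have hsum := congrFun hg a
    simp only [Finset.sum_apply, Pi.smul_apply, Set.indicator_apply, Set.mem_Ici, Pi.one_apply,
      smul_eq_mul, mul_ite, mul_one, mul_zero, Pi.zero_apply] at hsum
    rw [Finset.sum_ite, Finset.sum_const_zero, add_zero] at hsum
    have hsingle : ∑ b ∈ s with b ≤ a, g b = g a :=
      Finset.sum_eq_single_of_mem a (Finset.mem_filter.2 ⟨ha, le_rfl⟩) fun b hb hba => by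
        rw [Finset.mem_filter] at hb
        exact ih b (lt_of_le_of_ne hb.2 hba) hb.1
    rwa [hsingle] at hsum

theorem span_range_indicator_Ici_eq_top (K : Type*) [DivisionRing K] [Finite α] :
    span K (Set.range fun a : α => (Set.Ici a).indicator (1 : α → K)) = ⊤ := by
  have := Fintype.ofFinite α
  exact (linearIndependent_indicator_Ici K).span_eq_top_of_card_eq_finrank'
    (Module.finrank_fintype_fun_eq_card K).symm

theorem span_range_indicator_Ici_sub_one_eq_ker_proj [OrderTop α] (K : Type*) [DivisionRing K]
    [Finite α] :
    span K (Set.range fun a : α => (Set.Ici a).indicator (1 : α → K) - 1) =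
      LinearMap.ker (LinearMap.proj ⊤ : (α → K) →ₗ[K] K) := by
  have := Fintype.ofFinite α
  apply le_antisymm
  · rw [span_le]
    rintro _ ⟨a, rfl⟩
    simp
  · intro h hh
    obtain ⟨c, hc⟩ := (mem_span_range_iff_exists_fun K).1
      (span_range_indicator_Ici_eq_top (α := α) K ▸ mem_top : h ∈ _)
    have hc0 : ∑ a, c a = 0 := by
      simpa using congrFun hc ⊤ |>.trans hh
    have hrepr : h = ∑ a, c a • ((Set.Ici a).indicator 1 - 1) := by
      simp only [smul_sub, Finset.sum_sub_distrib, ← Finset.sum_smul, hc0, zero_smul, sub_zero,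
        hc]
    rw [hrepr]
    exact sum_mem fun a _ => smul_mem _ _ (subset_span ⟨a, rfl⟩)

theorem linearIndepOn_restrictSubEval_indicator_Ici [OrderBot α] [OrderTop α] [WellFoundedLT α]
    (R : Type*) [Ring R] :
    LinearIndepOn R (fun a : α => restrictSubEval R ⊤ ((Set.Ici a).indicator 1)) {⊥}ᶜ := by
  have hli := linearIndependent_indicator_Ici (α := α) R
  refine (hli.comp (Subtype.val : ({⊥}ᶜ : Set α) → α) Subtype.val_injective).map
    (f := restrictSubEval R (⊤ : α)) ?_
  have hker : (R ∙ (1 : α → R)) = span R ((fun a => (Set.Ici a).indicator 1) '' {⊥}) := by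
    rw [Set.image_singleton, Set.Ici_bot, Set.indicator_univ]
  rw [ker_restrictSubEval, hker, Set.range_comp, Subtype.range_coe]
  exact hli.disjoint_span_image disjoint_compl_left

end IciIndicator

instance {α : Type*} [Finite α] : Finite (Setoid α) :=
  Finite.of_injective (fun s : Setoid α => ⇑s) fun _ _ h => Setoid.eq_iff_rel_eq.2 h

namespace Setoid

variable {α : Type*}

def support (σ : Setoid α) : Set α := {x | ∃ y, y ≠ x ∧ σ x y}

def extendDiscrete (S : Set α) (τ : Setoid S) : Setoid α where
  r x y := x = y ∨ ∃ (hx : x ∈ S) (hy : y ∈ S), τ ⟨x, hx⟩ ⟨y, hy⟩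
  iseqv.refl _ := Or.inl rfl
  iseqv.symm := by
    rintro x y (rfl | ⟨hx, hy, h⟩)
    exacts [Or.inl rfl, Or.inr ⟨hy, hx, τ.symm' h⟩]
  iseqv.trans := by
    rintro x y z (rfl | ⟨hx, hy, hxy⟩) (rfl | ⟨hy', hz, hyz⟩)
    exacts [Or.inl rfl, Or.inr ⟨hy', hz, hyz⟩, Or.inr ⟨hx, hy, hxy⟩,
      Or.inr ⟨hx, hz, τ.trans' hxy hyz⟩]

theorem support_extendDiscrete_subset (S : Set α) (τ : Setoid S) :
    (extendDiscrete S τ).support ⊆ S := by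
  rintro x ⟨y, hne, rfl | ⟨hx, -, -⟩⟩
  exacts [absurd rfl hne, hx]

end Setoid

theorem extendDiscrete_le_iff {α : Type*} {S : Set α} {τ : Setoid S} {P : Setoid α} :
    Setoid.extendDiscrete S τ ≤ P ↔ τ ≤ restrictS S P := by
  refine ⟨fun h a b hab => h (Or.inr ⟨a.2, b.2, hab⟩), ?_⟩
  rintro h x y (rfl | ⟨hx, hy, hxy⟩)
  exacts [P.refl' x, h hxy]

theorem extendDiscrete_restrictS {α : Type*} {S : Set α} {σ : Setoid α} (h : σ.support ⊆ S) :
    Setoid.extendDiscrete S (restrictS S σ) = σ := by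
  refine le_antisymm (extendDiscrete_le_iff.2 le_rfl) fun x y hxy => ?_
  by_cases hne : x = y
  · exact Or.inl hne
  · exact Or.inr ⟨h ⟨y, Ne.symm hne, hxy⟩, h ⟨x, hne, σ.symm' hxy⟩, hxy⟩

theorem setOf_support_subset_eq_range {α : Type*} (S : Set α) :
    {σ : Setoid α | σ.support ⊆ S} = Set.range (Setoid.extendDiscrete S) := by
  ext σ
  exact ⟨fun h => ⟨_, extendDiscrete_restrictS h⟩,
    by rintro ⟨τ, rfl⟩; exact Setoid.support_extendDiscrete_subset S τ⟩

section Restriction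

variable {α : Type*}

noncomputable def coarseningIndicator (σ : Setoid α) : NontrivPart α → ℝ :=
  restrictSubEval ℝ ⊤ ((Set.Ici σ).indicator 1)

theorem coarseningIndicator_apply (σ : Setoid α) (P : NontrivPart α) :
    coarseningIndicator σ P = (Set.Ici σ).indicator 1 P.1 - 1 := by
  simp [coarseningIndicator, restrictSubEval]

theorem coarseningIndicator_bot : coarseningIndicator (⊥ : Setoid α) = 0 := by
  ext P
  simp [coarseningIndicator_apply]

theorem linearIndepOn_coarseningIndicator [Finite α] :
    LinearIndepOn ℝ coarseningIndicator {(⊥ : Setoid α)}ᶜ :=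
  linearIndepOn_restrictSubEval_indicator_Ici ℝ

open Classical in
theorem ind_eq_funLeft (S : Set α) (π : Setoid S) :
    ind S π =
      LinearMap.funLeft ℝ ℝ (fun P : NontrivPart α => restrictS S P.1) (Pi.single π 1) := by
  ext P
  simp [ind, Pi.single_apply]

theorem coarseningIndicator_extendDiscrete (S : Set α) (τ : Setoid S) :
    coarseningIndicator (Setoid.extendDiscrete S τ) =
      LinearMap.funLeft ℝ ℝ (fun P : NontrivPart α => restrictS S P.1)
        ((Set.Ici τ).indicator 1 - 1) := by
  classical
  ext P
  simp [coarseningIndicator_apply, Set.indicator_apply, extendDiscrete_le_iff]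

theorem U_eq_span_coarseningIndicator [Finite α] (S : Set α) :
    U S = span ℝ (coarseningIndicator '' ({σ | σ.support ⊆ S} \ {⊥})) := by
  classical
  set ρ := LinearMap.funLeft ℝ ℝ (fun P : NontrivPart α => restrictS S P.1)
  calc U S = map ρ (span ℝ ((fun π : Setoid S => Pi.single π (1 : ℝ)) '' {⊤}ᶜ)) := by
        rw [U, map_span, Set.image_image]
        congr 1
        ext f
        simp [ind_eq_funLeft, ρ, eq_comm]
    _ = span ℝ (Set.range fun τ => coarseningIndicator (Setoid.extendDiscrete S τ)) := by
      rw [span_single_one_compl_eq_ker_proj, ← span_range_indicator_Ici_sub_one_eq_ker_proj,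
        map_span, ← Set.range_comp]
      simp only [Function.comp_def, coarseningIndicator_extendDiscrete, ρ]
    _ = span ℝ (coarseningIndicator '' {σ | σ.support ⊆ S}) := by
      rw [setOf_support_subset_eq_range, ← Set.range_comp]
      rfl
    _ = span ℝ (coarseningIndicator '' ({σ | σ.support ⊆ S} \ {⊥})) :=
      (span_image_sdiff_singleton_of_eq_zero coarseningIndicator_bot _).symm

end Restriction

/-- `(∑_i U_{S_i}) ∩ (∑_j U_{T_j}) = ∑_i ∑_j U_{S_i ∩ T_j}`. -/
theorem stmt5 (m l : ℕ) (S : Fin m → Set V) (T : Fin l → Set V) :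
    (⨆ i, U (S i)) ⊓ (⨆ j, U (T j)) = ⨆ i, ⨆ j, U (S i ∩ T j) := by
  have hA : ∀ W : Set V, {σ : Setoid V | σ.support ⊆ W} \ {⊥} ⊆ {⊥}ᶜ := fun _ _ hσ => hσ.2
  simp only [U_eq_span_coarseningIndicator, ← span_iUnion, ← Set.image_iUnion]
  rw [linearIndepOn_coarseningIndicator.span_image_inf_span_image
    (Set.iUnion_subset fun i => hA (S i)) (Set.iUnion_subset fun j => hA (T j))]
  congr 2
  ext σ
  simp only [Set.mem_inter_iff, Set.mem_iUnion, Set.mem_sdiff, Set.mem_ofPred_eq,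
    Set.subset_inter_iff]
  tauto
end

section
/- Let S be a finite set with s = |S| ≥ 2 elements. Define w : Π*(S) → ℝ by w(π) = (−1)^{s−|π|} (|π| − 1)!, where |π| is the number of blocks. Then for every proper subset T ⊊ S with |T| ≥ 2 and every nontrivial partition τ of T, the sum of w(π) over all π ∈ Π*(S) with π|_T = τ equals 0. -/
open Submodule Finset

variable {V : Type*} [Fintype V] [DecidableEq V]

instance : Finite (Setoid V) :=
  Finite.of_injective (fun s : Setoid V => s.r)
    (fun _ _ h => Setoid.ext fun x y => iff_of_eq (congrFun (congrFun h x) y))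

/-!
With `μ(k) = (-1)^(k-1) (k-1)!`, the Möbius function `μ(π, ⊤)` of the partition lattice at a
partition with `k` blocks, one has `∑_{π ≥ ρ} μ(|π|) = 0` for every `ρ ≠ ⊤`: fixing `x`, the
partitions `π ≥ ρ` with a given restriction `Q` to the complement of the `ρ`-class of `x` are
obtained by letting that class form a new block or join one of the blocks of `Q`, and
`μ(|Q| + 1) + |Q| μ(|Q|) = 0`. For `T ⊊ S` and a partition `σ` of `T`, the partitions `π` with
`σ ≤ π|_T` are those above the partition whose blocks are the blocks of `σ` and the singletons
off `T`, which is not `⊤`. Downward induction on `σ` then makes every sum over `π|_T = σ` vanish,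
and `w` is `μ` up to the global sign `(-1)^(s-1)`.
-/

namespace Setoid

variable {α β : Type*}

theorem map_le_iff_le_comap (r : Setoid α) (f : α → β) (s : Setoid β) :
    r.map f ≤ s ↔ r ≤ s.comap f := by
  refine (gi.gc _ s).trans ⟨fun h a b hab => h _ _ ⟨a, b, hab, rfl, rfl⟩, ?_⟩
  rintro h _ _ ⟨a, b, hab, rfl, rfl⟩
  exact h hab

theorem map_subtypeVal_ne_top {s : Set α} (hs : s ≠ Set.univ) (hne : s.Nonempty)
    (r : Setoid s) : r.map Subtype.val ≠ ⊤ := by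
  obtain ⟨a, ha⟩ := (Set.ne_univ_iff_exists_notMem s).1 hs
  obtain ⟨b, hb⟩ := hne
  have hle : r.map Subtype.val ≤ ker (· ∈ s) :=
    (map_le_iff_le_comap _ _ _).2 fun x y _ => by simp [ker_def, x.2, y.2]
  intro htop
  have hab : (a ∈ s) = (b ∈ s) := ker_def.1 (hle (eq_top_iff.1 htop a b))
  exact ha (hab ▸ hb)

end Setoid

theorem Finset.eq_zero_of_sum_filter_le_eq_zero {ι M : Type*} [PartialOrder ι] [Fintype ι]
    [DecidableLE ι] [AddCommMonoid M] {F : ι → M} (h : ∀ i, ∑ j with i ≤ j, F j = 0)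
    (i : ι) : F i = 0 := by
  classical
  induction i using WellFoundedGT.induction with
  | _ i ih =>
    have hrest : ∑ j ∈ ({j | i ≤ j} : Finset ι).erase i, F j = 0 :=
      sum_eq_zero fun j hj => ih j (lt_of_le_of_ne (mem_filter.1 (mem_of_mem_erase hj)).2
        (ne_of_mem_erase hj).symm)
    rw [← h i, ← add_sum_erase _ _ (mem_filter.2 ⟨mem_univ i, le_rfl⟩), hrest, add_zero]

section InsertClass

variable {X : Type*} (x : X) (ρ : Setoid X) (Q : Setoid {z // ¬ ρ x z})

open Classical in
noncomputable def insertLabel (o : Option (Quotient Q)) (z : X) : Option (Quotient Q) :=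
  if hz : ρ x z then o else some ⟦⟨z, hz⟩⟧

/-- The partition of `X` restricting to `Q` off the `ρ`-class of `x`, in which that class joins
the block `o` of `Q`, or forms a block of its own when `o = none`. -/
noncomputable def insertClass (o : Option (Quotient Q)) : Setoid X :=
  Setoid.ker (insertLabel x ρ Q o)

variable {x ρ Q} {o : Option (Quotient Q)}

theorem insertLabel_of_rel {z : X} (hz : ρ x z) : insertLabel x ρ Q o z = o :=
  dif_pos hz

theorem insertLabel_of_not_rel {z : X} (hz : ¬ ρ x z) :
    insertLabel x ρ Q o z = some ⟦⟨z, hz⟩⟧ :=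
  dif_neg hz

theorem comap_insertClass : (insertClass x ρ Q o).comap Subtype.val = Q := by
  ext a b
  rw [Setoid.comap_rel, insertClass, Setoid.ker_def, insertLabel_of_not_rel a.2,
    insertLabel_of_not_rel b.2, Option.some_inj, Quotient.eq]

theorem le_insertClass (hQ : ρ.comap Subtype.val ≤ Q) : ρ ≤ insertClass x ρ Q o := by
  intro a b hab
  rw [insertClass, Setoid.ker_def]
  by_cases ha : ρ x a
  · rw [insertLabel_of_rel ha, insertLabel_of_rel (ρ.trans' ha hab)]
  · have hb : ¬ ρ x b := fun hb => ha (ρ.trans' hb (ρ.symm' hab))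
    rw [insertLabel_of_not_rel ha, insertLabel_of_not_rel hb]
    exact congrArg some (Quotient.sound (hQ hab))

theorem insertClass_rel_iff_eq_some (z : {z // ¬ ρ x z}) :
    insertClass x ρ Q o x z ↔ o = some ⟦z⟧ := by
  rw [insertClass, Setoid.ker_def, insertLabel_of_rel (ρ.refl' x), insertLabel_of_not_rel z.2]

theorem insertClass_injective : Function.Injective (insertClass x ρ Q) := by
  intro o₁ o₂ h
  have hsome : ∀ c, o₁ = some c ↔ o₂ = some c := fun c => by
    rw [← Quotient.out_eq c, ← insertClass_rel_iff_eq_some, ← insertClass_rel_iff_eq_some, h]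
  cases o₁ with
  | none => cases o₂ with
    | none => rfl
    | some c => simpa using hsome c
  | some c => exact ((hsome c).1 rfl).symm

theorem insertClass_eq {P : Setoid X} (hρP : ρ ≤ P) (hPQ : P.comap Subtype.val = Q)
    (ho : ∀ z : {z // ¬ ρ x z}, P x z ↔ o = some ⟦z⟧) : insertClass x ρ Q o = P := by
  have hQ (a b : {z // ¬ ρ x z}) : Q a b ↔ P a b := by rw [← hPQ]; rfl
  ext a b
  rw [insertClass, Setoid.ker_def]
  by_cases ha : ρ x a <;> by_cases hb : ρ x b
  · rw [insertLabel_of_rel ha, insertLabel_of_rel hb]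
    exact iff_of_true rfl (P.trans' (P.symm' (hρP ha)) (hρP hb))
  · rw [insertLabel_of_rel ha, insertLabel_of_not_rel hb, ← ho]
    exact ⟨fun h => P.trans' (P.symm' (hρP ha)) h, fun h => P.trans' (hρP ha) h⟩
  · rw [insertLabel_of_not_rel ha, insertLabel_of_rel hb, eq_comm, ← ho]
    exact ⟨fun h => P.trans' (P.symm' h) (hρP hb), fun h => P.trans' (hρP hb) (P.symm' h)⟩
  · rw [insertLabel_of_not_rel ha, insertLabel_of_not_rel hb, Option.some_inj, Quotient.eq, hQ]

theorem exists_insertClass_eq {P : Setoid X} (hρP : ρ ≤ P) (hPQ : P.comap Subtype.val = Q) :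
    ∃ o, insertClass x ρ Q o = P := by
  by_cases hx : ∃ z : {z // ¬ ρ x z}, P x z
  · obtain ⟨z₀, hz₀⟩ := hx
    refine ⟨some ⟦z₀⟧, insertClass_eq hρP hPQ fun z => ?_⟩
    rw [Option.some_inj, Quotient.eq, ← hPQ, Setoid.comap_rel]
    exact ⟨fun h => P.trans' (P.symm' hz₀) h, fun h => P.trans' hz₀ h⟩
  · push Not at hx
    exact ⟨none, insertClass_eq hρP hPQ fun z => by simpa using hx z⟩

theorem range_insertLabel :
    Set.range (insertLabel x ρ Q o) = insert o (Set.range some) := by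
  ext w
  constructor
  · rintro ⟨z, rfl⟩
    by_cases hz : ρ x z
    · exact Or.inl (insertLabel_of_rel hz)
    · exact Or.inr ⟨_, (insertLabel_of_not_rel hz).symm⟩
  · rintro (rfl | ⟨c, rfl⟩)
    · exact ⟨x, insertLabel_of_rel (ρ.refl' x)⟩
    · exact ⟨c.out, by rw [insertLabel_of_not_rel c.out.2, Subtype.coe_eta, Quotient.out_eq]⟩

theorem card_quotient_insertClass_none [Finite X] :
    Nat.card (Quotient (insertClass x ρ Q none)) = Nat.card (Quotient Q) + 1 := by
  rw [insertClass, Nat.card_congr (Setoid.quotientKerEquivRange _), range_insertLabel,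
    Nat.card_coe_set_eq, Set.ncard_insert_of_notMem (by simp) (Set.toFinite _),
    ← Nat.card_coe_set_eq, Nat.card_range_of_injective (Option.some_injective _)]

theorem card_quotient_insertClass_some (c : Quotient Q) :
    Nat.card (Quotient (insertClass x ρ Q (some c))) = Nat.card (Quotient Q) := by
  rw [insertClass, Nat.card_congr (Setoid.quotientKerEquivRange _), range_insertLabel,
    Set.insert_eq_self.2 (Set.mem_range_self c),
    Nat.card_range_of_injective (Option.some_injective _)]

end InsertClass

open Classical in
theorem sum_of_le_of_comap_eq {X M : Type*} [Finite X] [Fintype (Setoid X)]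
    [AddCommMonoid M] {x : X} {ρ : Setoid X} {Q : Setoid {z // ¬ ρ x z}}
    (hQ : ρ.comap Subtype.val ≤ Q) (f : ℕ → M) :
    ∑ P with ρ ≤ P ∧ P.comap Subtype.val = Q, f (Nat.card (Quotient P)) =
      f (Nat.card (Quotient Q) + 1) + Nat.card (Quotient Q) • f (Nat.card (Quotient Q)) := by
  have : Fintype (Quotient Q) := Fintype.ofFinite _
  have hfilter : ({P | ρ ≤ P ∧ P.comap Subtype.val = Q} : Finset (Setoid X)) =
      univ.image (insertClass x ρ Q) := by
    ext P
    simp only [mem_filter, mem_univ, true_and, mem_image]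
    exact ⟨fun h => exists_insertClass_eq h.1 h.2,
      fun ⟨_, hP⟩ => hP ▸ ⟨le_insertClass hQ, comap_insertClass⟩⟩
  rw [hfilter, sum_image insertClass_injective.injOn, Fintype.sum_option,
    card_quotient_insertClass_none]
  simp only [card_quotient_insertClass_some, sum_const, card_univ, Nat.card_eq_fintype_card]

open Classical in
theorem sum_of_le_eq_zero {X M : Type*} [Finite X] [Fintype (Setoid X)]
    [AddCommMonoid M] {f : ℕ → M} (hf : ∀ c, 1 ≤ c → f (c + 1) + c • f c = 0)
    {ρ : Setoid X} (hρ : ρ ≠ ⊤) : ∑ P with ρ ≤ P, f (Nat.card (Quotient P)) = 0 := by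
  obtain ⟨x, y, hxy⟩ : ∃ x y, ¬ ρ x y := by
    by_contra! h
    exact hρ (Setoid.eq_top_iff.2 h)
  have := Fintype.ofFinite {z // ¬ ρ x z}
  have := Fintype.ofFinite (Setoid {z // ¬ ρ x z})
  rw [← sum_fiberwise _ fun P => P.comap (Subtype.val : {z // ¬ ρ x z} → X)]
  refine sum_eq_zero fun Q _ => ?_
  rw [filter_filter]
  by_cases hQ : ρ.comap Subtype.val ≤ Q
  · have : Nonempty (Quotient Q) := ⟨⟦⟨y, hxy⟩⟧⟩
    rw [sum_of_le_of_comap_eq hQ]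
    exact hf _ Nat.card_pos
  · refine sum_eq_zero fun P hP => absurd ?_ hQ
    obtain ⟨hρP, rfl⟩ := (mem_filter.1 hP).2
    exact fun a b h => hρP h

open Classical in
theorem sum_comap_subtypeVal_eq_eq_zero {X M : Type*} [Finite X] [Fintype (Setoid X)]
    [AddCommMonoid M] {f : ℕ → M} (hf : ∀ c, 1 ≤ c → f (c + 1) + c • f c = 0)
    {s : Set X} [Fintype (Setoid s)] (hs : s ≠ Set.univ) (hne : s.Nonempty) (σ : Setoid s) :
    ∑ P with P.comap Subtype.val = σ, f (Nat.card (Quotient P)) = 0 := by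
  revert σ
  refine eq_zero_of_sum_filter_le_eq_zero fun σ => ?_
  erw [sum_fiberwise_eq_sum_filter]
  simp only [mem_filter, mem_univ, true_and, ← Setoid.map_le_iff_le_comap]
  exact sum_of_le_eq_zero hf (Setoid.map_subtypeVal_ne_top hs hne σ)

def partitionMobius (k : ℕ) : ℝ := (-1) ^ (k - 1) * (k - 1).factorial

theorem partitionMobius_succ_add_nsmul {c : ℕ} (hc : 1 ≤ c) :
    partitionMobius (c + 1) + c • partitionMobius c = 0 := by
  obtain ⟨d, rfl⟩ := Nat.exists_eq_add_of_le' hc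
  rw [partitionMobius, partitionMobius, Nat.add_sub_cancel, Nat.add_sub_cancel, nsmul_eq_mul,
    pow_succ, Nat.factorial_succ]
  push_cast
  ring

theorem neg_one_pow_sub_mul_factorial {k n : ℕ} (hk : 1 ≤ k) (hkn : k ≤ n) :
    (-1 : ℝ) ^ (n - k) * (k - 1).factorial = (-1) ^ (n - 1) * partitionMobius k := by
  rw [partitionMobius, ← mul_assoc, ← pow_add,
    show n - 1 + (k - 1) = n - k + 2 * (k - 1) by omega, pow_add, pow_mul, neg_one_sq, one_pow,
    mul_one]

theorem finsum_nontrivPart_eq {α M : Type*} [AddCommMonoid M] {f : Setoid α → M}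
    (hf : f ⊤ = 0) : ∑ᶠ P : NontrivPart α, f P.1 = ∑ᶠ P, f P := by
  refine (finsum_subtype_eq_finsum_cond _).trans (finsum_congr fun P => ?_)
  by_cases hP : P = ⊤ <;> simp [hP, hf]

open Classical in
theorem stmt8_general (T : Set V) (hT : T ≠ Set.univ) (τ : Setoid ↥T) (hτ : τ ≠ ⊤) :
    ∑ᶠ P : NontrivPart V,
      (if restrictS T P.1 = τ then
        (-1 : ℝ) ^ (Fintype.card V - Nat.card (Quotient P.1)) *
          (Nat.factorial (Nat.card (Quotient P.1) - 1) : ℝ)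
      else 0) = 0 := by
  obtain ⟨t, -, -⟩ : ∃ a b : T, ¬ τ a b := by
    by_contra! h
    exact hτ (Setoid.eq_top_iff.2 h)
  have := Fintype.ofFinite (Setoid V)
  have := Fintype.ofFinite (Setoid T)
  have hblocks (P : Setoid V) :
      1 ≤ Nat.card (Quotient P) ∧ Nat.card (Quotient P) ≤ Fintype.card V := by
    have : Nonempty (Quotient P) := ⟨⟦t.1⟧⟩
    exact ⟨Nat.card_pos, Nat.card_eq_fintype_card (α := V) ▸
      Nat.card_le_card_of_surjective _ Quotient.mk_surjective⟩
  have htop : restrictS T ⊤ ≠ τ := fun h => hτ (h ▸ rfl)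
  calc
    _ = ∑ᶠ P : Setoid V, if restrictS T P = τ then
          (-1 : ℝ) ^ (Fintype.card V - Nat.card (Quotient P)) *
            (Nat.card (Quotient P) - 1).factorial
        else 0 := by
      rw [← finsum_nontrivPart_eq]
      exact if_neg htop
    _ = (-1) ^ (Fintype.card V - 1) *
          ∑ P with P.comap Subtype.val = τ, partitionMobius (Nat.card (Quotient P)) := by
      rw [finsum_eq_sum_of_fintype, mul_sum, sum_filter]
      refine sum_congr rfl fun P _ => ?_
      rw [restrictS]
      split_ifs
      · exact neg_one_pow_sub_mul_factorial (hblocks P).1 (hblocks P).2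
      · rfl
    _ = 0 := by
      rw [sum_comap_subtypeVal_eq_eq_zero (fun _ => partitionMobius_succ_add_nsmul) hT ⟨t, t.2⟩,
        mul_zero]

open Classical in
/-- with `w(π) = (−1)^{s−|π|} (|π|−1)!` on `Π*(S)` (here the ambient finite set is
`V`, `s = |V|`, and `|π| = ` number of blocks `= |Quotient π|`), for every proper subset
`T ⊊ V` with `|T| ≥ 2` and every nontrivial partition `τ` of `T`, the sum of `w(π)` over all
`π ∈ Π*(V)` with `π|_T = τ` vanishes. -/
theorem stmt8 (h2 : 2 ≤ Fintype.card V) (T : Set V) (hT : T ≠ Set.univ)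
    (hT2 : 2 ≤ Nat.card ↥T) (τ : Setoid ↥T) (hτ : τ ≠ ⊤) :
    ∑ᶠ P : NontrivPart V,
      (if restrictS T P.1 = τ then
        (-1 : ℝ) ^ (Fintype.card V - Nat.card (Quotient P.1)) *
          (Nat.factorial (Nat.card (Quotient P.1) - 1) : ℝ)
      else 0) = 0 :=
  stmt8_general T hT τ hτ
end

section
/- For T ⊆ S ⊆ V with |T| ≥ 2 and any nontrivial partition σ of T, the indicator 1_{T,σ} decomposes as the sum ∑ 1_{S,π} over all partitions π ∈ Π(S) whose restriction to T equals σ; in particular 1_{T,σ} ∈ U_S, hence U_T ⊆ U_S. -/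
open Submodule Finset

variable {V : Type*} [Fintype V] [DecidableEq V]

lemma comap_top {α β : Type*} (f : α → β) : Setoid.comap f ⊤ = ⊤ :=
  Setoid.ext fun _ _ => ⟨fun _ => trivial, fun _ => trivial⟩

/-- for `T ⊆ S ⊆ V`, `|T| ≥ 2` and `σ` a nontrivial partition of `T`, the
indicator `1_{T,σ}` decomposes as `∑ 1_{S,π}` over the (nontrivial) partitions `π` of `S`
whose restriction to `T` equals `σ`; in particular `1_{T,σ} ∈ U_S` and `U_T ⊆ U_S`. -/
theorem stmt17 (T S : Set V) (hTS : T ⊆ S) (hT : 2 ≤ Nat.card ↥T)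
    (σ : Setoid ↥T) (hσ : σ ≠ ⊤) :
    (ind T σ =
      ∑ᶠ (π : Setoid ↥S) (_ : π ≠ ⊤ ∧ Setoid.comap (Set.inclusion hTS) π = σ), ind S π) ∧
    ind T σ ∈ U S ∧ U T ≤ U S := by
  classical
  have hfin : Finite (Setoid ↥S) := Finite.of_injective (fun s : Setoid ↥S => s.r)
    (fun _ _ h => Setoid.ext fun x y => iff_of_eq (congrFun (congrFun h x) y))
  have hfty : Fintype (Setoid ↥S) := Fintype.ofFinite _
  have key : ∀ P : Setoid V,
      restrictS T P = Setoid.comap (Set.inclusion hTS) (restrictS S P) := fun P => rfl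
  -- main computation for an arbitrary nontrivial σ'
  have hmain : ∀ (σ' : Setoid ↥T), σ' ≠ ⊤ →
      ind T σ' = ∑ π : Setoid ↥S,
        if (π ≠ ⊤ ∧ Setoid.comap (Set.inclusion hTS) π = σ') then ind S π else 0 := by
    intro σ' hσ'
    funext P
    rw [Finset.sum_apply]
    set r := restrictS S P.1 with hrdef
    have hLHS : ind T σ' P = if (r ≠ ⊤ ∧ Setoid.comap (Set.inclusion hTS) r = σ') then 1 else 0 := by
      show (if restrictS T P.1 = σ' then (1:ℝ) else 0) = _
      rw [key P.1]
      by_cases h : Setoid.comap (Set.inclusion hTS) r = σ'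
      · rw [if_pos h, if_pos ⟨fun ht => hσ' (by rw [← h, ht, comap_top]), h⟩]
      · rw [if_neg h, if_neg fun hh => h hh.2]
    rw [hLHS]
    have : ∀ π : Setoid ↥S,
        (if (π ≠ ⊤ ∧ Setoid.comap (Set.inclusion hTS) π = σ') then ind S π else 0) P
        = if r = π then (if (π ≠ ⊤ ∧ Setoid.comap (Set.inclusion hTS) π = σ') then (1:ℝ) else 0) else 0 := by
      intro π
      by_cases h : (π ≠ ⊤ ∧ Setoid.comap (Set.inclusion hTS) π = σ')
      · simp [if_pos h, ind, ← hrdef]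
      · simp [if_neg h]
    rw [Finset.sum_congr rfl fun π _ => this π, Finset.sum_ite_eq]
    simp
  have hmem : ∀ (σ' : Setoid ↥T), σ' ≠ ⊤ → ind T σ' ∈ U S := by
    intro σ' hσ'
    rw [hmain σ' hσ']
    refine Submodule.sum_mem _ fun π _ => ?_
    by_cases h : (π ≠ ⊤ ∧ Setoid.comap (Set.inclusion hTS) π = σ')
    · rw [if_pos h]
      exact Submodule.subset_span ⟨π, h.1, rfl⟩
    · rw [if_neg h]; exact Submodule.zero_mem _
  refine ⟨?_, hmem σ hσ, ?_⟩
  · rw [hmain σ hσ, finsum_eq_sum_of_fintype]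
    exact Finset.sum_congr rfl fun π _ => (finsum_eq_if).symm
  · rw [U, Submodule.span_le]
    rintro f ⟨σ', hσ', rfl⟩
    exact hmem σ' hσ'
end
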